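/- arXiv:1402.1295 — 3 statements merged into one kernel-verified Lean document; each statement's English description precedes it below -/
import Mathlib

section
/- Let (F, f) be a transformation pair between fiber bundles ε⁽¹⁾ : P₁ → Q₁ and ε⁽²⁾ : P₂ → Q₂, let L₂ be an f-regular Lagrangian on T_{P₂}Q₂, and let β : P₁ → V*f be a smooth map covering ε⁽¹⁾. Then the map ψ_{L₂,β} : T_{P₁}Q₁ → T_{P₂}Q₂ is the unique map satisfying the two conditions: (1) ψ_{L₂,β} is a compatible transformation for (F, f); (2) α_{L₂} ∘ ψ_{L₂,β} = β ∘ τ₂⁽¹⁾, where τ₂⁽¹⁾ : T_{P₁}Q₁ → P₁ is the projection onto P₁. -/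
/-!
STATEMENT 4: Let (F, f) be a transformation pair between fiber bundles
ε⁽¹⁾ : P₁ → Q₁ and ε⁽²⁾ : P₂ → Q₂, let L₂ be an f-regular Lagrangian on
T_{P₂}Q₂, and let β : P₁ → V*f be a smooth map covering ε⁽¹⁾.  Then the map
ψ_{L₂,β} : T_{P₁}Q₁ → T_{P₂}Q₂ is the unique map satisfying:
(1) ψ_{L₂,β} is a compatible transformation for (F, f);
(2) α_{L₂} ∘ ψ_{L₂,β} = β ∘ τ₂⁽¹⁾.

Following the paper, we work in coordinates adapted to the chain of fibrations
P₁ → P₂ → Q₂ → Q₁ induced by a transformation pair: Q₁ = EQ (coordinates qⁱ),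
Q₂ = EQ × EA (coordinates (qⁱ, q̄ᵃ)), P₂ = Q₂ × EB (coordinates (qⁱ, q̄ᵃ, p̄^α)),
P₁ = P₂ × EC (coordinates (qⁱ, q̄ᵃ, p̄^α, p^γ)); the maps f, F, ε⁽¹⁾, ε⁽²⁾ are
the corresponding projections.  Then T_{P₁}Q₁ = P₁ × EQ, T_{P₂}Q₂ = P₂ × (EQ × EA),
the f-vertical bundle Vf is Q₂ × EA, and V*f has fibers EA →L[ℝ] ℝ.
-/

noncomputable section

/-- A diffeomorphism between (subsets modelled on) normed spaces. -/
def IsDiffeo {X Y : Type*} [NormedAddCommGroup X] [NormedSpace ℝ X]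
    [NormedAddCommGroup Y] [NormedSpace ℝ Y] (g : X → Y) : Prop :=
  ContDiff ℝ (⊤ : ℕ∞) g ∧ ∃ h : Y → X, ContDiff ℝ (⊤ : ℕ∞) h ∧
    Function.LeftInverse h g ∧ Function.RightInverse h g

/-- The fiber derivative of a Lagrangian `L` on `T_PQ = P × V`:
`⟨FL(p,v), w⟩ = d/du|₀ L(p, v + u w)`. -/
def fdL {P V : Type*} [NormedAddCommGroup P] [NormedSpace ℝ P]
    [NormedAddCommGroup V] [NormedSpace ℝ V]
    (L : P × V → ℝ) (s : P × V) : V →L[ℝ] ℝ :=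
  fderiv ℝ (fun v => L (s.1, v)) s.2

theorem compatible_transformation_unique
    {EQ EA EB EC : Type*}
    [NormedAddCommGroup EQ] [NormedSpace ℝ EQ]
    [NormedAddCommGroup EA] [NormedSpace ℝ EA]
    [NormedAddCommGroup EB] [NormedSpace ℝ EB]
    [NormedAddCommGroup EC] [NormedSpace ℝ EC]
    -- the Lagrangian L₂ on T_{P₂}Q₂ = P₂ × (EQ × EA), smooth
    (L₂ : ((EQ × EA) × EB) × (EQ × EA) → ℝ) (hL₂ : ContDiff ℝ (⊤ : ℕ∞) L₂)
    -- L₂ is f-regular: for each (v_{q₂}, p₂) the map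
    -- V_{q₂}f → V*_{q₂}f, w ↦ α_{L₂}(v_{q₂} + w, p₂) is a diffeomorphism
    (hreg : ∀ (p₂ : (EQ × EA) × EB) (v : EQ × EA),
      IsDiffeo (fun w : EA =>
        ((fdL L₂ (p₂, v + (0, w))).comp (ContinuousLinearMap.inr ℝ EQ EA)
          : EA →L[ℝ] ℝ)))
    -- β : P₁ → V*f, smooth, covering ε⁽¹⁾
    (β : (((EQ × EA) × EB) × EC) → (EA →L[ℝ] ℝ)) (hβ : ContDiff ℝ (⊤ : ℕ∞) β) :
    -- there is a unique ψ : T_{P₁}Q₁ → T_{P₂}Q₂ which is (F,f)-compatible and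
    -- satisfies α_{L₂} ∘ ψ = β ∘ τ₂⁽¹⁾
    ∃! ψ : ((((EQ × EA) × EB) × EC) × EQ) → (((EQ × EA) × EB) × (EQ × EA)),
      (∀ s, (ψ s).1 = s.1.1 ∧ ((ψ s).2).1 = s.2) ∧
      (∀ s, ((fdL L₂ (ψ s)).comp (ContinuousLinearMap.inr ℝ EQ EA)
              : EA →L[ℝ] ℝ) = β s.1) := by
  classical
  have key : ∀ (p₂ : (EQ × EA) × EB) (v : EQ × EA) (y : EA →L[ℝ] ℝ),
      ∃! w : EA, ((fdL L₂ (p₂, v + (0, w))).comp (ContinuousLinearMap.inr ℝ EQ EA)) = y := by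
    intro p₂ v y
    obtain ⟨-, h, -, hl, hr⟩ := hreg p₂ v
    exact ⟨h y, hr y, fun w hw => by rw [← hw]; exact (hl w).symm⟩
  refine ⟨fun s => (s.1.1, (s.2, 0) + (0, (key s.1.1 (s.2, 0) (β s.1)).choose)), ⟨?_, ?_⟩, ?_⟩
  · intro s; exact ⟨rfl, by simp⟩
  · intro s; exact (key s.1.1 (s.2, 0) (β s.1)).choose_spec.1
  · intro ψ ⟨h1, h2⟩
    funext s
    obtain ⟨ha, hb⟩ := h1 s
    have hψ : ψ s = (s.1.1, (s.2, 0) + (0, (ψ s).2.2)) := by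
      rw [← ha]
      ext <;> simp [hb]
    have := (key s.1.1 (s.2, 0) (β s.1)).choose_spec.2 (ψ s).2.2
      (by simpa only [← hψ] using h2 s)
    rw [hψ, this]
end
end

section
/- Let (F, f) be a transformation pair between ε⁽¹⁾ : P₁ → Q₁ and ε⁽²⁾ : P₂ → Q₂ with 2·dim Q₁ + dim(fiber of ε⁽¹⁾) = 2·dim Q₂ + dim(fiber of ε⁽²⁾) (so the fibers of F and f have equal dimension), let L be an f-regular Lagrangian on T_{P₂}Q₂ and β : P₁ → V*f a map covering ε⁽¹⁾. If for every p₂ ∈ P₂ with ε⁽²⁾(p₂) = q₂ the restriction β|_{F⁻¹(p₂)} : F⁻¹(p₂) → V*_{q₂}f is a diffeomorphism, then ψ_{L,β} : T_{P₁}Q₁ → T_{P₂}Q₂ is a diffeomorphism. -/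
/-!
STATEMENT 7 (Proposition 4 of the paper): Let (F, f) be a transformation pair
between ε⁽¹⁾ : P₁ → Q₁ and ε⁽²⁾ : P₂ → Q₂ with
2·dim Q₁ + dim(fiber of ε⁽¹⁾) = 2·dim Q₂ + dim(fiber of ε⁽²⁾), let L be an
f-regular Lagrangian on T_{P₂}Q₂ and β : P₁ → V*f a map covering ε⁽¹⁾.
If for every p₂ ∈ P₂ the restriction β|_{F⁻¹(p₂)} : F⁻¹(p₂) → V*_{q₂}f is a
diffeomorphism, then ψ_{L,β} : T_{P₁}Q₁ → T_{P₂}Q₂ is a diffeomorphism.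

Adapted coordinates as in the paper: Q₁ = EQ, Q₂ = EQ × EA, P₂ = Q₂ × EB,
P₁ = P₂ × EC; all structure maps are projections; the fiber of ε⁽¹⁾ is
EA × EB × EC, the fiber of ε⁽²⁾ is EB, the fiber of F is EC and that of f
is EA.  ψ_{L,β} is the unique compatible map with α_L ∘ ψ_{L,β} = β ∘ τ₂⁽¹⁾.
-/

noncomputable section

open Module ContinuousLinearMap

section Aux

variable {P W Z : Type*}
  [NormedAddCommGroup P] [NormedSpace ℝ P] [FiniteDimensional ℝ P]
  [NormedAddCommGroup W] [NormedSpace ℝ W] [FiniteDimensional ℝ W]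
  [NormedAddCommGroup Z] [NormedSpace ℝ Z] [FiniteDimensional ℝ Z]

/-- derivative identities for a global diffeo. -/
lemma diffeo_fderiv_inverse {g : W → Z} {h : Z → W}
    (hg : ContDiff ℝ (⊤ : ℕ∞) g) (hh : ContDiff ℝ (⊤ : ℕ∞) h)
    (hl : Function.LeftInverse h g) (hr : Function.RightInverse h g) (w : W) :
    (fderiv ℝ h (g w)).comp (fderiv ℝ g w) = ContinuousLinearMap.id ℝ W ∧
    (fderiv ℝ g w).comp (fderiv ℝ h (g w)) = ContinuousLinearMap.id ℝ Z := by
  constructor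
  · have h1 : fderiv ℝ (h ∘ g) w = (fderiv ℝ h (g w)).comp (fderiv ℝ g w) :=
      fderiv_comp w (hh.differentiable (by simp) _) (hg.differentiable (by simp) _)
    have h2 : (h ∘ g) = fun x => x := funext hl
    rw [← h1, h2, fderiv_id']
  · have h1 : fderiv ℝ (g ∘ h) (g w) =
        (fderiv ℝ g (h (g w))).comp (fderiv ℝ h (g w)) :=
      fderiv_comp _ (hg.differentiable (by simp) _) (hh.differentiable (by simp) _)
    rw [hl w] at h1
    have h2 : (g ∘ h) = fun x => x := funext hr
    rw [← h1, h2, fderiv_id']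

/-- Parametric global inverse function theorem. -/
lemma param_inverse (G : P × W → Z) (hG : ContDiff ℝ (⊤ : ℕ∞) G)
    (hfib : ∀ p, IsDiffeo (fun w => G (p, w))) :
    ∃ H : P × Z → W, ContDiff ℝ (⊤ : ℕ∞) H ∧ (∀ p w, H (p, G (p, w)) = w) ∧
      (∀ p z, G (p, H (p, z)) = z) := by
  classical
  have hgp : ∀ p, ContDiff ℝ (⊤ : ℕ∞) (fun w => G (p, w)) := fun p => (hfib p).1
  choose h hh hl hr using fun p => (hfib p).2
  refine ⟨fun y => h y.1 y.2, ?_, fun p w => hl p w, fun p z => hr p z⟩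
  have hGhat : ContDiff ℝ (⊤ : ℕ∞) (fun x : P × W => (x.1, G x)) :=
    contDiff_fst.prodMk hG
  have hGhat_inj : Function.Injective (fun x : P × W => (x.1, G x)) := by
    intro x y hxy
    have h1 : x.1 = y.1 := (Prod.ext_iff.1 hxy).1
    have h2 : G x = G y := (Prod.ext_iff.1 hxy).2
    have h3 : G (x.1, x.2) = G (x.1, y.2) := by
      rw [Prod.mk.eta, h2, h1, Prod.mk.eta]
    have h4 := congrArg (h x.1) h3
    rw [hl x.1, hl x.1] at h4
    exact Prod.ext h1 h4
  rw [contDiff_iff_contDiffAt]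
  intro y
  obtain ⟨p, z⟩ := y
  set w := h p z with hw
  have hGpw : G (p, w) = z := hr p z
  set A := fderiv ℝ G (p, w) with hA
  have hBd : HasFDerivAt (fun w' => G (p, w')) (A.comp (inr ℝ P W)) w :=
    ((hG.differentiable (by simp) (p, w)).hasFDerivAt).comp w
      (hasFDerivAt_prodMk_right p w)
  have hBeq : fderiv ℝ (fun w' => G (p, w')) w = A.comp (inr ℝ P W) := hBd.fderiv
  obtain ⟨hinvl, hinvr⟩ := diffeo_fderiv_inverse (hgp p) (hh p) (hl p) (hr p) w
  set B' := fderiv ℝ (h p) (G (p, w)) with hB'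
  rw [hBeq] at hinvl hinvr
  set D := (ContinuousLinearMap.fst ℝ P W).prod A with hD
  have hDd : HasFDerivAt (fun x : P × W => (x.1, G x)) D (p, w) :=
    (hasFDerivAt_fst).prodMk (hG.differentiable (by simp) (p, w)).hasFDerivAt
  have hbij : Function.Bijective D := by
    constructor
    · intro u v huv
      have h1 : u.1 = v.1 := (Prod.ext_iff.1 huv).1
      have h2 : A u = A v := (Prod.ext_iff.1 huv).2
      have h3 : A (u - v) = 0 := by rw [map_sub, h2, sub_self]
      have h4 : (u - v) = ((0 : P), u.2 - v.2) := by
        have : u.1 - v.1 = 0 := sub_eq_zero_of_eq h1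
        ext
        · simpa using this
        · rfl
      have h5 : A.comp (inr ℝ P W) (u.2 - v.2) = 0 := by
        rw [ContinuousLinearMap.comp_apply, inr_apply, ← h4, h3]
      have h6 : u.2 - v.2 = 0 := by
        have h7 := congrArg B' h5
        rw [← ContinuousLinearMap.comp_apply, hinvl, map_zero] at h7
        simpa using h7
      exact Prod.ext h1 (sub_eq_zero.mp h6)
    · rintro ⟨a, b⟩
      refine ⟨(a, B' (b - A (a, 0))), ?_⟩
      have hsplit : ((a, B' (b - A (a, 0))) : P × W)
          = (a, 0) + (0, B' (b - A (a, 0))) := by simp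
      have hval : A (a, B' (b - A (a, 0))) = b := by
        rw [hsplit, map_add]
        have h8 : A ((0 : P), B' (b - A (a, 0)))
            = A.comp (inr ℝ P W) (B' (b - A (a, 0))) := rfl
        have h9 : A.comp (inr ℝ P W) (B' (b - A (a, 0))) = b - A (a, 0) := by
          simpa [ContinuousLinearMap.comp_apply] using
            ContinuousLinearMap.ext_iff.mp hinvr (b - A (a, 0))
        rw [h8, h9, add_sub_cancel]
      exact Prod.ext rfl hval
  let e : (P × W) ≃L[ℝ] (P × Z) :=
    (LinearEquiv.ofBijective (D : (P × W) →ₗ[ℝ] (P × Z)) hbij).toContinuousLinearEquiv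
  have hcoe : (e : (P × W) →L[ℝ] (P × Z)) = D := by
    apply ContinuousLinearMap.ext
    intro x
    rfl
  have hDd' : HasFDerivAt (fun x : P × W => (x.1, G x)) (e : (P × W) →L[ℝ] (P × Z)) (p, w) := by
    rw [hcoe]; exact hDd
  have hcd : ContDiffAt ℝ (⊤ : ℕ∞) (fun x : P × W => (x.1, G x)) (p, w) := hGhat.contDiffAt
  have hn : ((⊤ : ℕ∞) : WithTop ℕ∞) ≠ 0 := by simp
  have hloc : ContDiffAt ℝ (⊤ : ℕ∞) (hcd.localInverse hDd' hn) ((p, w).1, G (p, w)) :=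
    hcd.to_localInverse hDd' hn
  have hstrict := hcd.hasStrictFDerivAt' hDd' hn
  have hev : ∀ᶠ y' in nhds ((p, w).1, G (p, w)),
      (fun x : P × W => (x.1, G x)) (hcd.localInverse hDd' hn y') = y' :=
    hstrict.eventually_right_inverse
  have hHhat : ∀ y' : P × Z, (fun x : P × W => (x.1, G x)) (y'.1, h y'.1 y'.2) = y' := by
    intro y'
    exact Prod.ext rfl (hr y'.1 y'.2)
  have heq : ∀ᶠ y' in nhds ((p, w).1, G (p, w)),
      (fun y'' : P × Z => (y''.1, h y''.1 y''.2)) y' = hcd.localInverse hDd' hn y' := by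
    filter_upwards [hev] with y' hy'
    exact hGhat_inj ((hHhat y').trans hy'.symm)
  have hHhat_cd : ContDiffAt ℝ (⊤ : ℕ∞) (fun y'' : P × Z => (y''.1, h y''.1 y''.2))
      ((p, w).1, G (p, w)) :=
    hloc.congr_of_eventuallyEq heq
  have hfinal : ContDiffAt ℝ (⊤ : ℕ∞) (fun y'' : P × Z => (y''.1, h y''.1 y''.2)) (p, z) := by
    rwa [show (((p, w).1 : P), G (p, w)) = (p, z) by rw [hGpw]] at hHhat_cd
  exact (contDiffAt_snd.comp _ hfinal :)

end Aux

theorem psi_is_diffeomorphism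
    {EQ EA EB EC : Type*}
    [NormedAddCommGroup EQ] [NormedSpace ℝ EQ] [FiniteDimensional ℝ EQ]
    [NormedAddCommGroup EA] [NormedSpace ℝ EA] [FiniteDimensional ℝ EA]
    [NormedAddCommGroup EB] [NormedSpace ℝ EB] [FiniteDimensional ℝ EB]
    [NormedAddCommGroup EC] [NormedSpace ℝ EC] [FiniteDimensional ℝ EC]
    -- dimension condition: 2 dim Q₁ + dim fiber ε⁽¹⁾ = 2 dim Q₂ + dim fiber ε⁽²⁾
    (hdim : 2 * finrank ℝ EQ + (finrank ℝ EA + finrank ℝ EB + finrank ℝ EC)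
      = 2 * (finrank ℝ EQ + finrank ℝ EA) + finrank ℝ EB)
    (L : ((EQ × EA) × EB) × (EQ × EA) → ℝ) (hL : ContDiff ℝ (⊤ : ℕ∞) L)
    -- L is f-regular
    (hreg : ∀ (p₂ : (EQ × EA) × EB) (v : EQ × EA),
      IsDiffeo (fun w : EA =>
        ((fdL L (p₂, v + (0, w))).comp (ContinuousLinearMap.inr ℝ EQ EA)
          : EA →L[ℝ] ℝ)))
    -- β : P₁ → V*f covering ε⁽¹⁾, smooth
    (β : (((EQ × EA) × EB) × EC) → (EA →L[ℝ] ℝ)) (hβ : ContDiff ℝ (⊤ : ℕ∞) β)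
    -- β restricted to each fiber F⁻¹(p₂) ≅ EC is a diffeomorphism onto V*_{q₂}f
    (hβfib : ∀ p₂ : (EQ × EA) × EB, IsDiffeo (fun c : EC => β (p₂, c)))
    -- ψ = ψ_{L,β}: the compatible map with α_L ∘ ψ = β ∘ τ₂⁽¹⁾
    (ψ : ((((EQ × EA) × EB) × EC) × EQ) → (((EQ × EA) × EB) × (EQ × EA)))
    (hcomp : ∀ s, (ψ s).1 = s.1.1 ∧ ((ψ s).2).1 = s.2)
    (hαψ : ∀ s, ((fdL L (ψ s)).comp (ContinuousLinearMap.inr ℝ EQ EA)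
            : EA →L[ℝ] ℝ) = β s.1) :
    IsDiffeo ψ := by
  classical
  -- smoothness of the fiber derivative
  have hfdL : ContDiff ℝ (⊤ : ℕ∞) (fun s : ((EQ × EA) × EB) × (EQ × EA) =>
      (fdL L s).comp (ContinuousLinearMap.inr ℝ EQ EA)) := by
    have h1 : ∀ s : ((EQ × EA) × EB) × (EQ × EA),
        fdL L s = (fderiv ℝ L s).comp (inr ℝ ((EQ × EA) × EB) (EQ × EA)) := by
      intro s
      have hd : HasFDerivAt (fun v => L (s.1, v))
          ((fderiv ℝ L (s.1, s.2)).comp (inr ℝ ((EQ × EA) × EB) (EQ × EA))) s.2 :=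
        ((hL.differentiable (by simp) (s.1, s.2)).hasFDerivAt).comp s.2
          (hasFDerivAt_prodMk_right s.1 s.2)
      simpa [fdL] using hd.fderiv
    have h2 : ContDiff ℝ (⊤ : ℕ∞) (fderiv ℝ L) := hL.fderiv_right (by simp)
    have h3 : ContDiff ℝ (⊤ : ℕ∞) (fun s : ((EQ × EA) × EB) × (EQ × EA) =>
        ((fderiv ℝ L s).comp (inr ℝ ((EQ × EA) × EB) (EQ × EA))).comp
          (ContinuousLinearMap.inr ℝ EQ EA)) :=
      (h2.clm_comp contDiff_const).clm_comp contDiff_const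
    have h4 : (fun s : ((EQ × EA) × EB) × (EQ × EA) =>
        (fdL L s).comp (ContinuousLinearMap.inr ℝ EQ EA))
        = fun s => ((fderiv ℝ L s).comp (inr ℝ ((EQ × EA) × EB) (EQ × EA))).comp
          (ContinuousLinearMap.inr ℝ EQ EA) := funext fun s => by rw [h1 s]
    rw [h4]
    exact h3
  -- the map G₁ in the fiber-regularity family
  set G₁ : ((((EQ × EA) × EB) × EQ) × EA) → (EA →L[ℝ] ℝ) :=
    fun x => (fdL L (x.1.1, (x.1.2, x.2))).comp (ContinuousLinearMap.inr ℝ EQ EA)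
    with hG₁def
  have hG₁ : ContDiff ℝ (⊤ : ℕ∞) G₁ := by
    have hin : ContDiff ℝ (⊤ : ℕ∞) (fun x : (((EQ × EA) × EB) × EQ) × EA =>
        ((x.1.1, (x.1.2, x.2)) : ((EQ × EA) × EB) × (EQ × EA))) :=
      (contDiff_fst.comp contDiff_fst).prodMk
        ((contDiff_snd.comp contDiff_fst).prodMk contDiff_snd)
    exact hfdL.comp hin
  have hG₁fib : ∀ p : ((EQ × EA) × EB) × EQ, IsDiffeo (fun w => G₁ (p, w)) := by
    intro p
    have := hreg p.1 (p.2, 0)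
    have heq : (fun w : EA =>
        ((fdL L (p.1, (p.2, (0 : EA)) + (0, w))).comp (ContinuousLinearMap.inr ℝ EQ EA)
          : EA →L[ℝ] ℝ)) = fun w => G₁ (p, w) := by
      funext w
      simp [hG₁def]
    rwa [heq] at this
  obtain ⟨H₁, hH₁sm, hH₁l, hH₁r⟩ := param_inverse G₁ hG₁ hG₁fib
  -- the map G₂ = β
  set G₂ : (((EQ × EA) × EB) × EC) → (EA →L[ℝ] ℝ) := β with hG₂def
  obtain ⟨H₂, hH₂sm, hH₂l, hH₂r⟩ := param_inverse G₂ hβ hβfib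
  -- closed form of ψ
  have hψeq : ψ = fun s => (s.1.1, (s.2, H₁ ((s.1.1, s.2), β s.1))) := by
    funext s
    obtain ⟨hc1, hc2⟩ := hcomp s
    have hα := hαψ s
    have hG₁ψ : G₁ (((ψ s).1, (ψ s).2.1), (ψ s).2.2) = β s.1 := by
      rw [hG₁def]
      simpa using hα
    have : H₁ (((ψ s).1, (ψ s).2.1), β s.1) = (ψ s).2.2 := by
      rw [← hG₁ψ]
      exact hH₁l _ _
    rw [hc1, hc2] at this
    refine Prod.ext hc1 (Prod.ext hc2 ?_)
    exact this.symm
  constructor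
  · rw [hψeq]
    have hβs : ContDiff ℝ (⊤ : ℕ∞) (fun s : (((EQ × EA) × EB) × EC) × EQ => β s.1) :=
      hβ.comp contDiff_fst
    exact ((contDiff_fst.comp contDiff_fst)).prodMk
      (contDiff_snd.prodMk (hH₁sm.comp
        (((contDiff_fst.comp contDiff_fst).prodMk contDiff_snd).prodMk hβs)))
  · refine ⟨fun x => ((x.1, H₂ (x.1, G₁ ((x.1, x.2.1), x.2.2))), x.2.1), ?_, ?_, ?_⟩
    · have hGx : ContDiff ℝ (⊤ : ℕ∞) (fun x : ((EQ × EA) × EB) × (EQ × EA) =>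
          G₁ ((x.1, x.2.1), x.2.2)) :=
        hG₁.comp ((contDiff_fst.prodMk (contDiff_fst.comp contDiff_snd)).prodMk
          (contDiff_snd.comp contDiff_snd))
      exact (contDiff_fst.prodMk (hH₂sm.comp (contDiff_fst.prodMk hGx))).prodMk
        (contDiff_fst.comp contDiff_snd)
    · intro s
      obtain ⟨hc1, hc2⟩ := hcomp s
      have hG₁ψ : G₁ (((ψ s).1, (ψ s).2.1), (ψ s).2.2) = β s.1 := by
        rw [hG₁def]
        simpa using hαψ s
      have hH2 : H₂ ((ψ s).1, G₁ (((ψ s).1, (ψ s).2.1), (ψ s).2.2)) = s.1.2 := by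
        rw [hG₁ψ, hc1]
        have hβ1 : β s.1 = G₂ (s.1.1, s.1.2) := by rw [hG₂def, Prod.mk.eta]
        rw [hβ1]
        exact hH₂l _ _
      show (((ψ s).1, H₂ ((ψ s).1, G₁ (((ψ s).1, (ψ s).2.1), (ψ s).2.2))), (ψ s).2.1) = s
      rw [hH2, hc1, hc2]
    · intro x
      rw [hψeq]
      have hβc : β ((x.1, H₂ (x.1, G₁ ((x.1, x.2.1), x.2.2))))
          = G₁ ((x.1, x.2.1), x.2.2) := hH₂r _ _
      simp only []
      refine Prod.ext rfl (Prod.ext rfl ?_)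
      show H₁ ((x.1, x.2.1), β (x.1, H₂ (x.1, G₁ ((x.1, x.2.1), x.2.2)))) = x.2.2
      rw [hβc]
      exact hH₁l _ _
end
end

section
/- Let (F, f) be a transformation pair between ε⁽¹⁾ : P₁ → Q₁ and ε⁽²⁾ : P₂ → Q₂, let (ε⁽²⁾, L₂, B₂) be a hyperregular magnetic Lagrangian system with L₂ f-regular, fix a connection A on f and a map β : P₁ → V*f covering ε⁽¹⁾, and assume ψ_{L₂,β} is a diffeomorphism. Then the induced magnetic Lagrangian system (ε⁽¹⁾, L₁, B₁), with L₁ = ψ_{L₂,β}*L₂ − ⟨β, A(ψ^{TQ₂}_{L₂,β})⟩ and B₁ = F*B₂ + d⟨β, A_{P₁}⟩, is hyperregular: its fiber derivative FL₁ is a global diffeomorphism and the 2-form (π₁⁽¹⁾)*ω_{Q₁} + (π₂⁽¹⁾)*B₁ on T*_{P₁}Q₁ is symplectic. -/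
/-!
STATEMENT 8: Let (F, f) be a transformation pair, (ε⁽²⁾, L₂, B₂) a hyperregular
magnetic Lagrangian system with L₂ f-regular, fix a connection A on f and a map
β : P₁ → V*f covering ε⁽¹⁾, and assume ψ_{L₂,β} is a diffeomorphism.  Then the
induced magnetic Lagrangian system (ε⁽¹⁾, L₁, B₁), with
L₁ = ψ*L₂ − ⟨β, A(ψ^{TQ₂})⟩ and B₁ = F*B₂ + d⟨β, A_{P₁}⟩, is hyperregular:
FL₁ is a global diffeomorphism and the 2-form (π₁⁽¹⁾)*ω_{Q₁} + (π₂⁽¹⁾)*B₁ on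
T*_{P₁}Q₁ is symplectic.

Adapted coordinates as in the paper: Q₁ = EQ, Q₂ = EQ × EA, P₂ = Q₂ × EB,
P₁ = P₂ × EC, all structure maps projections; T_{P}Q = P × V and
T*_{P}Q = P × (V →L[ℝ] ℝ).
-/

noncomputable section

/-- The (full) Legendre transformation FL : T_PQ → T*_PQ. -/
def FLmap {P V : Type*} [NormedAddCommGroup P] [NormedSpace ℝ P]
    [NormedAddCommGroup V] [NormedSpace ℝ V]
    (L : P × V → ℝ) (s : P × V) : P × (V →L[ℝ] ℝ) := (s.1, fdL L s)

/-- The 2-form π₁*ω_Q + π₂*B on T*_PQ = P × V*, for a bundle ε : P → Q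
(models of Q and of the velocities both equal to V). -/
def OmegaCot {P V : Type*} [NormedAddCommGroup P] [NormedSpace ℝ P]
    [NormedAddCommGroup V] [NormedSpace ℝ V]
    (ε : P → V) (B : P → P → P → ℝ)
    (z X Y : P × (V →L[ℝ] ℝ)) : ℝ :=
  Y.2 (fderiv ℝ ε z.1 X.1) - X.2 (fderiv ℝ ε z.1 Y.1) + B z.1 X.1 Y.1

/-- The 2-form π₁*ω_Q + π₂*B on T*_PQ is symplectic: nondegenerate and closed. -/
def IsSymplecticCot {P V : Type*} [NormedAddCommGroup P] [NormedSpace ℝ P]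
    [NormedAddCommGroup V] [NormedSpace ℝ V]
    (ε : P → V) (B : P → P → P → ℝ) : Prop :=
  (∀ (z X : P × (V →L[ℝ] ℝ)), (∀ Y, OmegaCot ε B z X Y = 0) → X = 0) ∧
  (∀ (z X Y W : P × (V →L[ℝ] ℝ)),
    fderiv ℝ (fun z' => OmegaCot ε B z' Y W) z X
      - fderiv ℝ (fun z' => OmegaCot ε B z' X W) z Y
      + fderiv ℝ (fun z' => OmegaCot ε B z' X Y) z W = 0)


section AuxLemmas
open ContinuousLinearMap
variable {X Y : Type*} [NormedAddCommGroup X] [NormedSpace ℝ X]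
  [NormedAddCommGroup Y] [NormedSpace ℝ Y]

theorem IsDiffeo.exists_inverse_clm {g : X → Y} (hg : IsDiffeo g) (x : X) :
    ∃ N : Y →L[ℝ] X, N.comp (fderiv ℝ g x) = ContinuousLinearMap.id ℝ X ∧
      (fderiv ℝ g x).comp N = ContinuousLinearMap.id ℝ Y := by
  obtain ⟨hgs, h, hhs, hl, hr⟩ := hg
  refine ⟨fderiv ℝ h (g x), ?_, ?_⟩
  · have h1 : HasFDerivAt (h ∘ g) ((fderiv ℝ h (g x)).comp (fderiv ℝ g x)) x :=
      (hhs.differentiable (by simp) (g x)).hasFDerivAt.comp x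
        (hgs.differentiable (by simp) x).hasFDerivAt
    have h2 : (h ∘ g) = _root_.id := funext hl
    rw [h2] at h1
    exact h1.unique (hasFDerivAt_id x)
  · have h1 : HasFDerivAt (g ∘ h) ((fderiv ℝ g (h (g x))).comp (fderiv ℝ h (g x))) (g x) :=
      (hgs.differentiable (by simp) (h (g x))).hasFDerivAt.comp (g x)
        (hhs.differentiable (by simp) (g x)).hasFDerivAt
    rw [hl x] at h1
    have h2 : (g ∘ h) = _root_.id := funext hr
    rw [h2] at h1
    exact h1.unique (hasFDerivAt_id (g x))

theorem IsDiffeo.fderiv_injective {g : X → Y} (hg : IsDiffeo g) (x : X) :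
    Function.Injective (fderiv ℝ g x) := by
  obtain ⟨N, hN, -⟩ := hg.exists_inverse_clm x
  intro a b hab
  have := congrArg N hab
  simpa [← ContinuousLinearMap.comp_apply, hN] using this

theorem IsDiffeo.fderiv_surjective {g : X → Y} (hg : IsDiffeo g) (x : X) :
    Function.Surjective (fderiv ℝ g x) := by
  obtain ⟨N, -, hN⟩ := hg.exists_inverse_clm x
  intro b
  refine ⟨N b, ?_⟩
  have := congrFun (congrArg DFunLike.coe hN) b
  simpa using this

variable {P V : Type*} [NormedAddCommGroup P] [NormedSpace ℝ P]
  [NormedAddCommGroup V] [NormedSpace ℝ V]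

theorem fdL_eq {L : P × V → ℝ} (s : P × V) (hL : DifferentiableAt ℝ L s) :
    fdL L s = (fderiv ℝ L s).comp (ContinuousLinearMap.inr ℝ P V) := by
  have h1 : HasFDerivAt (fun v => L (s.1, v))
      ((fderiv ℝ L s).comp (ContinuousLinearMap.inr ℝ P V)) s.2 := by
    have h2 := hL.hasFDerivAt.comp s.2 (hasFDerivAt_prodMk_right (𝕜 := ℝ) s.1 s.2)
    exact h2
  exact h1.fderiv

theorem fdL_apply {L : P × V → ℝ} (s : P × V) (hL : DifferentiableAt ℝ L s) (c : V) :
    fdL L s c = fderiv ℝ L s (0, c) := by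
  rw [fdL_eq s hL]; rfl

theorem contDiff_fdL {L : P × V → ℝ} (hL : ContDiff ℝ (⊤ : ℕ∞) L) :
    ContDiff ℝ (⊤ : ℕ∞) (fdL L) := by
  have : fdL L = fun s => (fderiv ℝ L s).comp (ContinuousLinearMap.inr ℝ P V) :=
    funext fun s => fdL_eq s (hL.differentiable (by simp) s)
  rw [this]
  exact (hL.fderiv_right (by simp)).clm_comp contDiff_const

end AuxLemmas

set_option maxHeartbeats 2000000 in
theorem induced_system_is_hyperregular
    {EQ EA EB EC : Type*}
    [NormedAddCommGroup EQ] [NormedSpace ℝ EQ]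
    [NormedAddCommGroup EA] [NormedSpace ℝ EA]
    [NormedAddCommGroup EB] [NormedSpace ℝ EB]
    [NormedAddCommGroup EC] [NormedSpace ℝ EC]
    (L₂ : ((EQ × EA) × EB) × (EQ × EA) → ℝ) (hL₂ : ContDiff ℝ (⊤ : ℕ∞) L₂)
    -- magnetic 2-form B₂ on P₂: smooth, antisymmetric, closed
    (B₂ : ((EQ × EA) × EB) → ((EQ × EA) × EB) →L[ℝ] ((EQ × EA) × EB) →L[ℝ] ℝ)
    (hB₂s : ContDiff ℝ (⊤ : ℕ∞) B₂)
    (hB₂a : ∀ p u v, B₂ p u v = - B₂ p v u)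
    (hB₂c : ∀ p u v w,
      fderiv ℝ (fun p' => B₂ p' v w) p u
        - fderiv ℝ (fun p' => B₂ p' u w) p v
        + fderiv ℝ (fun p' => B₂ p' u v) p w = 0)
    -- (ε⁽²⁾, L₂, B₂) is hyperregular
    (hFL₂ : IsDiffeo (FLmap L₂))
    (hsymp₂ : IsSymplecticCot (Prod.fst : ((EQ × EA) × EB) → EQ × EA)
      (fun p u v => B₂ p u v))
    -- L₂ is f-regular
    (hreg : ∀ (p₂ : (EQ × EA) × EB) (v : EQ × EA),
      IsDiffeo (fun w : EA =>
        ((fdL L₂ (p₂, v + (0, w))).comp (ContinuousLinearMap.inr ℝ EQ EA)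
          : EA →L[ℝ] ℝ)))
    -- connection A on f, smooth
    (A : (EQ × EA) → (EQ × EA) →L[ℝ] EA) (hAs : ContDiff ℝ (⊤ : ℕ∞) A)
    (hA : ∀ (q₂ : EQ × EA) (a : EA), A q₂ (0, a) = a)
    -- β covering ε⁽¹⁾, smooth
    (β : (((EQ × EA) × EB) × EC) → (EA →L[ℝ] ℝ)) (hβ : ContDiff ℝ (⊤ : ℕ∞) β)
    -- ψ = ψ_{L₂,β}, assumed to be a diffeomorphism
    (ψ : ((((EQ × EA) × EB) × EC) × EQ) → (((EQ × EA) × EB) × (EQ × EA)))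
    (hcomp : ∀ s, (ψ s).1 = s.1.1 ∧ ((ψ s).2).1 = s.2)
    (hαψ : ∀ s, ((fdL L₂ (ψ s)).comp (ContinuousLinearMap.inr ℝ EQ EA)
            : EA →L[ℝ] ℝ) = β s.1)
    (hψdiffeo : IsDiffeo ψ) :
    -- the induced system (ε⁽¹⁾, L₁, B₁) is hyperregular
    IsDiffeo (FLmap (fun s' : ((((EQ × EA) × EB) × EC) × EQ) =>
        L₂ (ψ s') - β s'.1 (A s'.1.1.1 ((ψ s').2)))) ∧
    IsSymplecticCot (fun p : ((EQ × EA) × EB) × EC => p.1.1.1)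
      (fun p u v =>
        B₂ p.1 u.1 v.1
          + (fderiv ℝ (fun p' : (((EQ × EA) × EB) × EC) =>
                β p' (A p'.1.1 v.1.1)) p u
            - fderiv ℝ (fun p' : (((EQ × EA) × EB) × EC) =>
                β p' (A p'.1.1 u.1.1)) p v)) := by
  classical
  obtain ⟨hψc, ψi, hψic, hψil, hψir⟩ := hψdiffeo
  obtain ⟨hFL2c, h₂, h₂c, h₂l, h₂r⟩ := hFL₂
  have hψd : Differentiable ℝ ψ := hψc.differentiable (by simp)
  have hL₂d : Differentiable ℝ L₂ := hL₂.differentiable (by simp)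
  have hβd : Differentiable ℝ β := hβ.differentiable (by simp)
  have hAd : Differentiable ℝ A := hAs.differentiable (by simp)
  set L₁ : ((((EQ × EA) × EB) × EC) × EQ) → ℝ :=
    fun s' => L₂ (ψ s') - β s'.1 (A s'.1.1.1 ((ψ s').2)) with hL₁def
  have hβA : ContDiff ℝ (⊤ : ℕ∞) (fun s' : ((((EQ × EA) × EB) × EC) × EQ) =>
      β s'.1 (A s'.1.1.1 ((ψ s').2))) :=
    (hβ.comp contDiff_fst).clm_apply
      ((hAs.comp (contDiff_fst.comp (contDiff_fst.comp contDiff_fst))).clm_apply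
        (contDiff_snd.comp hψc))
  have hL1 : ContDiff ℝ (⊤ : ℕ∞) L₁ := (hL₂.comp hψc).sub hβA
  have hL1d : Differentiable ℝ L₁ := hL1.differentiable (by simp)
  -- structure of the derivative of ψ
  have hJ1 : ∀ s S : ((((EQ × EA) × EB) × EC) × EQ), (fderiv ℝ ψ s S).1 = S.1.1 := by
    intro s S
    have e1 : (fun s' => (ψ s').1) =
        (fun s' : ((((EQ × EA) × EB) × EC) × EQ) => s'.1.1) :=
      funext fun s' => (hcomp s').1
    have d1 := (hψd s).hasFDerivAt.fst
    rw [e1] at d1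
    have d2 := (hasFDerivAt_fst (𝕜 := ℝ) (p := s)).fst
    have := congrFun (congrArg DFunLike.coe (d1.unique d2)) S
    simpa using this
  have hJ2 : ∀ s S : ((((EQ × EA) × EB) × EC) × EQ), (fderiv ℝ ψ s S).2.1 = S.2 := by
    intro s S
    have e1 : (fun s' => ((ψ s').2).1) =
        (fun s' : ((((EQ × EA) × EB) × EC) × EQ) => s'.2) :=
      funext fun s' => (hcomp s').2
    have d1 := ((hψd s).hasFDerivAt.snd).fst
    rw [e1] at d1
    have d2 := hasFDerivAt_snd (𝕜 := ℝ) (p := s)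
    have := congrFun (congrArg DFunLike.coe (d1.unique d2)) S
    simpa using this
  -- the key formula for the fiber derivative of L₁
  have key : ∀ s : ((((EQ × EA) × EB) × EC) × EQ),
      fdL L₁ s = (fdL L₂ (ψ s)).comp (ContinuousLinearMap.inl ℝ EQ EA)
        - ((β s.1).comp ((A s.1.1.1).comp (ContinuousLinearMap.inl ℝ EQ EA))) := by
    intro s
    have hψdd : HasFDerivAt ψ (fderiv ℝ ψ s) s := (hψd s).hasFDerivAt
    have hc1 : HasFDerivAt (fun s' => L₂ (ψ s'))
        ((fderiv ℝ L₂ (ψ s)).comp (fderiv ℝ ψ s)) s :=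
      (hL₂d (ψ s)).hasFDerivAt.comp s hψdd
    have hc2 : HasFDerivAt (fun s' : ((((EQ × EA) × EB) × EC) × EQ) => s'.1.1.1)
        ((ContinuousLinearMap.fst ℝ (EQ × EA) EB).comp
          ((ContinuousLinearMap.fst ℝ ((EQ × EA) × EB) EC).comp
            (ContinuousLinearMap.fst ℝ (((EQ × EA) × EB) × EC) EQ))) s :=
      (hasFDerivAt_fst.fst).fst
    have hc3 := (hAd s.1.1.1).hasFDerivAt.comp s hc2
    have hc4 := hψdd.snd
    have hc5 := hc3.clm_apply hc4
    have hc6 := (hβd s.1).hasFDerivAt.comp s (hasFDerivAt_fst (𝕜 := ℝ) (p := s))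
    have hc7 := hc6.clm_apply hc5
    have hc8 := hc1.sub hc7
    have hfd : fderiv ℝ L₁ s = _ := hc8.fderiv
    rw [fdL_eq s (hL1d s), hfd]
    ext w
    set J := fderiv ℝ ψ s with hJdef
    have hv : J ((0 : (((EQ × EA) × EB) × EC)), w)
        = ((0 : ((EQ × EA) × EB)), (w, (J ((0 : (((EQ × EA) × EB) × EC)), w)).2.2)) := by
      refine Prod.ext ?_ (Prod.ext ?_ rfl)
      · simpa using hJ1 s ((0 : (((EQ × EA) × EB) × EC)), w)
      · simpa using hJ2 s ((0 : (((EQ × EA) × EB) × EC)), w)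
    set g2 := (J ((0 : (((EQ × EA) × EB) × EC)), w)).2.2 with hg2def
    have hsplit : ((0 : ((EQ × EA) × EB)), (w, g2))
        = ((0 : ((EQ × EA) × EB)), (w, (0 : EA))) + ((0 : ((EQ × EA) × EB)), ((0 : EQ), g2)) := by
      simp
    have hαg2 : fdL L₂ (ψ s) ((0 : EQ), g2) = β s.1 g2 := by
      have := congrFun (congrArg DFunLike.coe (hαψ s)) g2
      simpa using this
    have hAadd : A s.1.1.1 (w, g2) = A s.1.1.1 (w, (0 : EA)) + g2 := by
      have : (w, g2) = (w, (0 : EA)) + ((0 : EQ), g2) := by simp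
      rw [this, map_add, hA]
    have hfdval : fderiv ℝ L₂ (ψ s) ((0 : ((EQ × EA) × EB)), (w, g2))
        = fdL L₂ (ψ s) (w, (0 : EA)) + β s.1 g2 := by
      rw [hsplit, map_add, ← fdL_apply (ψ s) (hL₂d (ψ s)), ← fdL_apply (ψ s) (hL₂d (ψ s)), hαg2]
    simp only [ContinuousLinearMap.comp_apply, ContinuousLinearMap.sub_apply,
      ContinuousLinearMap.inr_apply, ContinuousLinearMap.inl_apply,
      ContinuousLinearMap.add_apply, ContinuousLinearMap.coe_fst', ContinuousLinearMap.coe_snd',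
      ContinuousLinearMap.flip_apply]
    have hv2 : (J ((0 : (((EQ × EA) × EB) × EC)), w)).2 = (w, g2) := congrArg Prod.snd hv
    rw [hv2, hv]
    simp only [Function.comp_apply, Prod.fst_zero, map_zero, ContinuousLinearMap.zero_apply,
      add_zero, zero_add]
    rw [hAadd, hfdval, map_add]
    ring
  
  -- facts about the chosen inverse of FL₂
  have h₂fst : ∀ z, (h₂ z).1 = z.1 := fun z => congrArg Prod.fst (h₂r z)
  have h₂fdL : ∀ z, fdL L₂ (h₂ z) = z.2 := fun z => congrArg Prod.snd (h₂r z)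
  -- the momentum reconstruction map
  set M : ((((EQ × EA) × EB) × EC) × (EQ →L[ℝ] ℝ)) → ((EQ × EA) →L[ℝ] ℝ) :=
    fun z => ((z.2 + (β z.1).comp ((A z.1.1.1).comp (ContinuousLinearMap.inl ℝ EQ EA))).comp
        (ContinuousLinearMap.fst ℝ EQ EA)) + (β z.1).comp (ContinuousLinearMap.snd ℝ EQ EA)
    with hMdef
  have hMval : ∀ z c, M z c = z.2 c.1 + β z.1 (A z.1.1.1 (c.1, (0 : EA))) + β z.1 c.2 := by
    intro z c
    simp [hMdef, ContinuousLinearMap.comp_apply]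
  have hMc : ContDiff ℝ (⊤ : ℕ∞) M := by
    have t1 : ContDiff ℝ (⊤ : ℕ∞) (fun z : ((((EQ × EA) × EB) × EC) × (EQ →L[ℝ] ℝ)) =>
        (β z.1).comp ((A z.1.1.1).comp (ContinuousLinearMap.inl ℝ EQ EA))) :=
      (hβ.comp contDiff_fst).clm_comp
        ((hAs.comp (contDiff_fst.comp (contDiff_fst.comp contDiff_fst))).clm_comp
          contDiff_const)
    exact ((contDiff_snd.add t1).clm_comp contDiff_const).add
      ((hβ.comp contDiff_fst).clm_comp contDiff_const)
  have hMinr : ∀ z, (M z).comp (ContinuousLinearMap.inr ℝ EQ EA) = β z.1 := by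
    intro z
    ext a
    have := hMval z ((0 : EQ), a)
    simp only [ContinuousLinearMap.comp_apply, ContinuousLinearMap.inr_apply]
    rw [this]
    simp [Prod.mk_zero_zero]
  have hM : ∀ s, M (s.1, fdL L₁ s) = fdL L₂ (ψ s) := by
    intro s
    refine ContinuousLinearMap.ext fun c => ?_
    have e0 : c = (c.1, (0 : EA)) + ((0 : EQ), c.2) := by simp
    have e1 : fdL L₂ (ψ s) c = fdL L₂ (ψ s) (c.1, (0 : EA)) + β s.1 c.2 := by
      have h := congrFun (congrArg DFunLike.coe (hαψ s)) c.2
      simp only [ContinuousLinearMap.comp_apply, ContinuousLinearMap.inr_apply] at h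
      conv_lhs => rw [e0]
      rw [map_add, h]
    rw [hMval, e1, key s]
    simp only [ContinuousLinearMap.sub_apply, ContinuousLinearMap.comp_apply,
      ContinuousLinearMap.inl_apply]
    ring
  -- the inverse of FL₁
  set Fi : (((((EQ × EA) × EB) × EC) × (EQ →L[ℝ] ℝ))) → ((((EQ × EA) × EB) × EC) × EQ) :=
    fun z => (z.1, (h₂ (z.1.1, M z)).2.1) with hFidef
  have hFic : ContDiff ℝ (⊤ : ℕ∞) Fi :=
    contDiff_fst.prodMk (contDiff_fst.comp (contDiff_snd.comp
      (h₂c.comp ((contDiff_fst.comp contDiff_fst).prodMk hMc))))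
  have hleft : Function.LeftInverse Fi (FLmap L₁) := by
    intro s
    have e1 : (s.1.1, M (s.1, fdL L₁ s)) = FLmap L₂ (ψ s) := by
      rw [hM s]
      exact Prod.ext ((hcomp s).1).symm rfl
    show (s.1, (h₂ (s.1.1, M (s.1, fdL L₁ s))).2.1) = s
    rw [e1, h₂l (ψ s), (hcomp s).2]
  have hright : Function.RightInverse Fi (FLmap L₁) := by
    intro z
    set u : EQ × EA := (h₂ (z.1.1, M z)).2 with hudef
    have hu1 : (h₂ (z.1.1, M z)).1 = z.1.1 := h₂fst _
    have hufd : fdL L₂ (z.1.1, u) = M z := by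
      have h := h₂fdL (z.1.1, M z)
      have e : h₂ (z.1.1, M z) = (z.1.1, u) := Prod.ext hu1 rfl
      rwa [e] at h
    set s : ((((EQ × EA) × EB) × EC) × EQ) := (z.1, u.1) with hsdef
    have hψs2 : (ψ s).2.2 = u.2 := by
      obtain ⟨hGc, Gi, hGic, hGil, hGir⟩ := hreg z.1.1 (u.1, (0 : EA))
      apply hGil.injective
      show (fdL L₂ (z.1.1, (u.1, (0 : EA)) + ((0 : EQ), (ψ s).2.2))).comp
          (ContinuousLinearMap.inr ℝ EQ EA)
        = (fdL L₂ (z.1.1, (u.1, (0 : EA)) + ((0 : EQ), u.2))).comp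
          (ContinuousLinearMap.inr ℝ EQ EA)
      have e1 : (u.1, (0 : EA)) + ((0 : EQ), (ψ s).2.2) = (ψ s).2 := by
        refine Prod.ext ?_ ?_
        · show u.1 + 0 = (ψ s).2.1
          rw [(hcomp s).2]; simp [hsdef]
        · show (0 : EA) + (ψ s).2.2 = (ψ s).2.2
          simp
      have e2 : (u.1, (0 : EA)) + ((0 : EQ), u.2) = u := by
        refine Prod.ext ?_ ?_ <;> simp
      rw [e1, e2]
      have e3 : (z.1.1, (ψ s).2) = ψ s := Prod.ext ((hcomp s).1).symm rfl
      rw [e3, hαψ s, hufd, hMinr]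
    have hψeq : ψ s = (z.1.1, u) := by
      refine Prod.ext ((hcomp s).1) (Prod.ext ((hcomp s).2) hψs2)
    show (s.1, fdL L₁ s) = z
    refine Prod.ext rfl ?_
    show fdL L₁ s = z.2
    rw [key s, hψeq, hufd]
    ext e
    simp only [ContinuousLinearMap.sub_apply, ContinuousLinearMap.comp_apply,
      ContinuousLinearMap.inl_apply]
    rw [hMval]
    simp [hsdef]
  have hψdiffeo' : IsDiffeo ψ := ⟨hψc, ψi, hψic, hψil, hψir⟩
  -- derivative of the bundle projection ε₁
  have hε : ∀ x : (((EQ × EA) × EB) × EC),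
      fderiv ℝ (fun p : (((EQ × EA) × EB) × EC) => p.1.1.1) x
        = (ContinuousLinearMap.fst ℝ EQ EA).comp
            ((ContinuousLinearMap.fst ℝ (EQ × EA) EB).comp
              (ContinuousLinearMap.fst ℝ ((EQ × EA) × EB) EC)) :=
    fun x => ((hasFDerivAt_fst.fst).fst).fderiv
  -- smoothness of the contracted connection 1-form
  have hθc : ∀ c : EQ × EA, ContDiff ℝ (⊤ : ℕ∞)
      (fun p' : (((EQ × EA) × EB) × EC) => β p' (A p'.1.1 c)) :=
    fun c => hβ.clm_apply ((hAs.comp (contDiff_fst.comp contDiff_fst)).clm_apply contDiff_const)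
  -- expansion of its derivative
  have hθ : ∀ (p : (((EQ × EA) × EB) × EC)) (c : EQ × EA) (u : (((EQ × EA) × EB) × EC)),
      fderiv ℝ (fun p' : (((EQ × EA) × EB) × EC) => β p' (A p'.1.1 c)) p u
        = (fderiv ℝ β p u) (A p.1.1 c) + (β p) ((fderiv ℝ A p.1.1 u.1.1) c) := by
    intro p c u
    have d1 : HasFDerivAt (fun p' : (((EQ × EA) × EB) × EC) => A p'.1.1)
        ((fderiv ℝ A p.1.1).comp ((ContinuousLinearMap.fst ℝ (EQ × EA) EB).comp
          (ContinuousLinearMap.fst ℝ ((EQ × EA) × EB) EC))) p :=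
      (hAd p.1.1).hasFDerivAt.comp p (hasFDerivAt_fst.fst)
    have d2 := d1.clm_apply (hasFDerivAt_const c p)
    have d3 := (hβd p).hasFDerivAt.clm_apply d2
    have d3' : HasFDerivAt (fun p' : (((EQ × EA) × EB) × EC) => β p' (A p'.1.1 c))
        ((β p).comp (((fun p' : (((EQ × EA) × EB) × EC) => A p'.1.1) p).comp
            (0 : (((EQ × EA) × EB) × EC) →L[ℝ] EQ × EA) +
          ((fderiv ℝ A p.1.1).comp ((ContinuousLinearMap.fst ℝ (EQ × EA) EB).comp
            (ContinuousLinearMap.fst ℝ ((EQ × EA) × EB) EC))).flip c) +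
          (fderiv ℝ β p).flip ((fun p' : (((EQ × EA) × EB) × EC) => A p'.1.1) p c)) p := d3
    rw [d3'.fderiv]
    simp [ContinuousLinearMap.comp_apply]
    ring
  constructor
  · exact ⟨contDiff_fst.prodMk (contDiff_fdL hL1), Fi, hFic, hleft, hright⟩
  constructor
  · -- nondegeneracy
    intro z X hX
    obtain ⟨x, ξ⟩ := X
    have hX' : ∀ Y : ((((EQ × EA) × EB) × EC)) × (EQ →L[ℝ] ℝ),
        Y.2 (x.1.1.1) - ξ (Y.1.1.1.1)
          + (B₂ z.1.1 x.1 Y.1.1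
            + ((fderiv ℝ β z.1 x) (A z.1.1.1 Y.1.1.1)
                + β z.1 ((fderiv ℝ A z.1.1.1 x.1.1) Y.1.1.1)
              - ((fderiv ℝ β z.1 Y.1) (A z.1.1.1 x.1.1)
                + β z.1 ((fderiv ℝ A z.1.1.1 Y.1.1.1) x.1.1)))) = 0 := by
      intro Y
      have h := hX Y
      simp only [OmegaCot] at h
      rw [hε z.1] at h
      rw [hθ z.1 Y.1.1.1 x, hθ z.1 x.1.1 Y.1] at h
      simp only [ContinuousLinearMap.comp_apply, ContinuousLinearMap.coe_fst'] at h
      linarith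
    -- the EC-direction structures at the point z.1
    obtain ⟨hGc, Gi, hGic, hGil, hGir⟩ := hreg z.1.1 (0 : EQ × EA)
    have hGdiffeo : IsDiffeo (fun w : EA =>
        ((fdL L₂ (z.1.1, (0 : EQ × EA) + ((0 : EQ), w))).comp
          (ContinuousLinearMap.inr ℝ EQ EA))) := ⟨hGc, Gi, hGic, hGil, hGir⟩
    set G : EA → (EA →L[ℝ] ℝ) := fun w =>
      ((fdL L₂ (z.1.1, (0 : EQ × EA) + ((0 : EQ), w))).comp
        (ContinuousLinearMap.inr ℝ EQ EA)) with hGdef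
    set gc : EC → EA := fun c' => (ψ ((z.1.1, c'), (0 : EQ))).2.2 with hgcdef
    have hGg : ∀ c', G (gc c') = β (z.1.1, c') := by
      intro c'
      have e1 : ((0 : EQ × EA) + ((0 : EQ), gc c')) = (ψ ((z.1.1, c'), (0 : EQ))).2 := by
        refine Prod.ext ?_ ?_
        · show (0 : EQ) + (0 : EQ) = (ψ ((z.1.1, c'), (0 : EQ))).2.1
          rw [(hcomp ((z.1.1, c'), (0 : EQ))).2]
          simp
        · show (0 : EA) + gc c' = (ψ ((z.1.1, c'), (0 : EQ))).2.2
          simp [hgcdef]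
      have e2 : ((z.1.1 : (EQ × EA) × EB), (ψ ((z.1.1, c'), (0 : EQ))).2)
          = ψ ((z.1.1, c'), (0 : EQ)) :=
        Prod.ext ((hcomp ((z.1.1, c'), (0 : EQ))).1).symm rfl
      show (fdL L₂ (z.1.1, (0 : EQ × EA) + ((0 : EQ), gc c'))).comp
          (ContinuousLinearMap.inr ℝ EQ EA) = β (z.1.1, c')
      rw [e1, e2, hαψ ((z.1.1, c'), (0 : EQ))]
    set s₀ : ((((EQ × EA) × EB) × EC)) × EQ := (z.1, (0 : EQ)) with hs₀def
    set c₀ : EC := z.1.2 with hc₀def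
    have hι : HasFDerivAt (fun c' : EC => ((((z.1.1, c') : (((EQ × EA) × EB) × EC)), (0 : EQ))))
        ((ContinuousLinearMap.inr ℝ ((EQ × EA) × EB) EC).prod
          (0 : EC →L[ℝ] EQ)) c₀ :=
      (hasFDerivAt_prodMk_right (𝕜 := ℝ) z.1.1 c₀).prodMk (hasFDerivAt_const 0 c₀)
    have hψs₀ : HasFDerivAt ψ (fderiv ℝ ψ s₀) s₀ := (hψd s₀).hasFDerivAt
    have hgcd := ((hψs₀.comp c₀ hι).snd).snd
    set k : EC →L[ℝ] EA := (ContinuousLinearMap.snd ℝ EQ EA).comp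
      ((ContinuousLinearMap.snd ℝ ((EQ × EA) × EB) (EQ × EA)).comp
        ((fderiv ℝ ψ s₀).comp
          ((ContinuousLinearMap.inr ℝ ((EQ × EA) × EB) EC).prod (0 : EC →L[ℝ] EQ)))) with hkdef
    have hgcd' : HasFDerivAt gc k c₀ := hgcd
    have hk : ∀ y : EC, k y = (fderiv ℝ ψ s₀ ((((0 : (EQ × EA) × EB), y) : (((EQ × EA) × EB) × EC)), (0 : EQ))).2.2 := by
      intro y
      simp [hkdef, ContinuousLinearMap.comp_apply]
    set W : EA →L[ℝ] (EA →L[ℝ] ℝ) := fderiv ℝ G (gc c₀) with hWdef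
    have hGd : HasFDerivAt G W (gc c₀) := (hGdiffeo.1.differentiable (by simp) (gc c₀)).hasFDerivAt
    have hfun : (fun c' : EC => β (z.1.1, c')) = G ∘ gc := funext fun c' => (hGg c').symm
    have dβc : HasFDerivAt (fun c' : EC => β (z.1.1, c'))
        ((fderiv ℝ β z.1).comp (ContinuousLinearMap.inr ℝ ((EQ × EA) × EB) EC)) c₀ :=
      (hβd z.1).hasFDerivAt.comp c₀ (hasFDerivAt_prodMk_right z.1.1 c₀)
    have huniq : (fderiv ℝ β z.1).comp (ContinuousLinearMap.inr ℝ ((EQ × EA) × EB) EC)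
        = W.comp k := by
      rw [hfun] at dβc
      exact dβc.unique (hGd.comp c₀ hgcd')
    have hWk : ∀ y : EC, fderiv ℝ β z.1 (((0 : (EQ × EA) × EB), y)) = W (k y) := by
      intro y
      have := congrFun (congrArg DFunLike.coe huniq) y
      simpa using this
    have hWinj : Function.Injective W := hGdiffeo.fderiv_injective (gc c₀)
    have hWsurj : Function.Surjective W := hGdiffeo.fderiv_surjective (gc c₀)
    have hkinj : Function.Injective k := by
      intro a b hab
      have h0 : fderiv ℝ ψ s₀ ((((0 : (EQ × EA) × EB), a)), (0 : EQ))
          = fderiv ℝ ψ s₀ ((((0 : (EQ × EA) × EB), b)), (0 : EQ)) := by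
        refine Prod.ext ?_ (Prod.ext ?_ ?_)
        · rw [hJ1, hJ1]
        · rw [hJ2, hJ2]
        · rw [← hk, ← hk, hab]
      have h1 := hψdiffeo'.fderiv_injective s₀ h0
      have := congrArg (fun S : ((((EQ × EA) × EB) × EC)) × EQ => S.1.2) h1
      simpa using this
    have hksurj : Function.Surjective k := by
      intro b
      obtain ⟨S, hS⟩ := hψdiffeo'.fderiv_surjective s₀
        (((0 : (EQ × EA) × EB)), (((0 : EQ), b) : EQ × EA))
      have h1 : S.1.1 = 0 := by rw [← hJ1 s₀ S, hS]
      have h2 : S.2 = 0 := by rw [← hJ2 s₀ S, hS]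
      refine ⟨S.1.2, ?_⟩
      rw [hk]
      have e : ((((0 : (EQ × EA) × EB), S.1.2) : (((EQ × EA) × EB) × EC)), (0 : EQ)) = S :=
        Prod.ext (Prod.ext h1.symm rfl) h2.symm
      rw [e, hS]
    -- Step 1 : the EQ-component of x vanishes
    have hx1 : x.1.1.1 = 0 := by
      apply NormedSpace.eq_zero_of_forall_dual_eq_zero ℝ
      intro η
      have h := hX' (((0 : (((EQ × EA) × EB) × EC))), η)
      simpa using h
    -- Step 2 : the EA-component of x vanishes
    have ex : x.1.1 = ((0 : EQ), x.1.1.2) := Prod.ext hx1 rfl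
    have hxa : x.1.1.2 = 0 := by
      apply NormedSpace.eq_zero_of_forall_dual_eq_zero ℝ
      intro φ
      obtain ⟨w0, hw0⟩ := hWsurj φ
      obtain ⟨y, hy⟩ := hksurj w0
      have h := hX' ((((0 : (EQ × EA) × EB), y) : (((EQ × EA) × EB) × EC)), (0 : EQ →L[ℝ] ℝ))
      simp only [Prod.fst_zero, Prod.snd_zero, map_zero, ContinuousLinearMap.zero_apply,
        zero_sub, zero_add, add_zero, sub_zero, neg_eq_zero] at h
      rw [ex, hA] at h
      rw [hWk y, hy, hw0] at h
      -- h should now read : φ x.1.1.2 = 0 (possibly with stray zero simplifications)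
      linarith [h]
    have hx11 : x.1.1 = 0 := by
      rw [ex, hxa]
      exact Prod.mk_zero_zero
    -- Step 3 : the remaining kernel equation
    have hstar : ∀ y : (((EQ × EA) × EB) × EC),
        ξ y.1.1.1 = B₂ z.1.1 x.1 y.1 + (fderiv ℝ β z.1 x) (A z.1.1.1 y.1.1) := by
      intro y
      have h := hX' (y, (0 : EQ →L[ℝ] ℝ))
      rw [hx11] at h
      simp only [map_zero, ContinuousLinearMap.zero_apply, ContinuousLinearMap.map_zero,
        add_zero, zero_add, sub_zero, zero_sub] at h
      linarith
    -- Step 4 : apply nondegeneracy of the second system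
    have hker2 := hsymp₂.1 ((z.1.1), (0 : (EQ × EA) →L[ℝ] ℝ))
      (x.1, ξ.comp (ContinuousLinearMap.fst ℝ EQ EA)
        - (fderiv ℝ β z.1 x).comp (A z.1.1.1)) ?_
    swap
    · intro Y₂
      simp only [OmegaCot]
      rw [fderiv_fst]
      have h := hstar (Y₂.1, (0 : EC))
      simp only [ContinuousLinearMap.coe_fst', ContinuousLinearMap.sub_apply,
        ContinuousLinearMap.add_apply, ContinuousLinearMap.comp_apply]
      rw [hx11]
      simp only [map_zero]
      simp only at h
      linarith
    have hx10 : x.1 = 0 := by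
      have := congrArg Prod.fst hker2
      simpa using this
    have hξ₂ : ξ.comp (ContinuousLinearMap.fst ℝ EQ EA)
        - (fderiv ℝ β z.1 x).comp (A z.1.1.1) = 0 := by
      have := congrArg Prod.snd hker2
      simpa using this
    have hlam : fderiv ℝ β z.1 x = 0 := by
      ext a
      have h := congrFun (congrArg DFunLike.coe hξ₂) (((0 : EQ), a))
      simp only [ContinuousLinearMap.sub_apply, ContinuousLinearMap.comp_apply,
        ContinuousLinearMap.coe_fst', ContinuousLinearMap.zero_apply] at h
      rw [hA] at h
      simpa using h
    have hξ : ξ = 0 := by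
      ext e
      have h := congrFun (congrArg DFunLike.coe hξ₂) ((e, (0 : EA)))
      simp only [ContinuousLinearMap.sub_apply, ContinuousLinearMap.comp_apply,
        ContinuousLinearMap.coe_fst', ContinuousLinearMap.zero_apply, hlam] at h
      simpa using h
    have hx2 : x.2 = 0 := by
      have h1 : W (k x.2) = 0 := by
        rw [← hWk x.2, show (((0 : (EQ × EA) × EB), x.2) : (((EQ × EA) × EB) × EC)) = x from
          Prod.ext hx10.symm rfl, hlam]
      have h2 : k x.2 = 0 := hWinj (by rw [h1, map_zero])
      exact hkinj (by rw [h2, map_zero])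
    refine Prod.ext (Prod.ext ?_ ?_) ?_
    · simpa using hx10
    · simpa using hx2
    · simpa using hξ
  · -- closedness
    intro z X Y W'
    have hθder : ∀ c : EQ × EA, ContDiff ℝ (⊤ : ℕ∞)
        (fderiv ℝ (fun p' : (((EQ × EA) × EB) × EC) => β p' (A p'.1.1 c))) :=
      fun c => (hθc c).fderiv_right (by simp)
    have hBd1 : ∀ a b : (EQ × EA) × EB, ContDiff ℝ (⊤ : ℕ∞)
        (fun pp : (((EQ × EA) × EB) × EC) => B₂ pp.1 a b) :=
      fun a b => ((hB₂s.comp contDiff_fst).clm_apply contDiff_const).clm_apply contDiff_const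
    have hBd2 : ∀ (c : EQ × EA) (u : (((EQ × EA) × EB) × EC)), ContDiff ℝ (⊤ : ℕ∞)
        (fun pp : (((EQ × EA) × EB) × EC) =>
          fderiv ℝ (fun p' : (((EQ × EA) × EB) × EC) => β p' (A p'.1.1 c)) pp u) :=
      fun c u => (hθder c).clm_apply contDiff_const
    -- second-derivative evaluation
    have hsnd : ∀ (c : EQ × EA) (u T1 : (((EQ × EA) × EB) × EC)),
        fderiv ℝ (fun pp : (((EQ × EA) × EB) × EC) =>
            fderiv ℝ (fun p' : (((EQ × EA) × EB) × EC) => β p' (A p'.1.1 c)) pp u) z.1 T1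
          = fderiv ℝ (fderiv ℝ (fun p' : (((EQ × EA) × EB) × EC) => β p' (A p'.1.1 c))) z.1 T1 u := by
      intro c u T1
      have d := (((hθder c).differentiable (by simp)) z.1).hasFDerivAt.clm_apply
        (hasFDerivAt_const u z.1)
      rw [d.fderiv]
      simp
    have hswz : ∀ (c : EQ × EA) (a b : (((EQ × EA) × EB) × EC)),
        fderiv ℝ (fderiv ℝ (fun p' : (((EQ × EA) × EB) × EC) => β p' (A p'.1.1 c))) z.1 a b
          = fderiv ℝ (fderiv ℝ (fun p' : (((EQ × EA) × EB) × EC) => β p' (A p'.1.1 c))) z.1 b a :=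
      fun c a b => ((hθc c).contDiffAt.isSymmSndFDerivAt (by simp; exact ENat.LEInfty.out)) a b
    -- chain rule through the EC-factor for the magnetic term
    have hB2chain : ∀ (a b : (EQ × EA) × EB) (T1 : (((EQ × EA) × EB) × EC)),
        fderiv ℝ (fun pp : (((EQ × EA) × EB) × EC) => B₂ pp.1 a b) z.1 T1
          = fderiv ℝ (fun p₂ : (EQ × EA) × EB => B₂ p₂ a b) z.1.1 T1.1 := by
      intro a b T1
      have hF : Differentiable ℝ (fun p₂ : (EQ × EA) × EB => B₂ p₂ a b) :=
        (((hB₂s.clm_apply contDiff_const).clm_apply contDiff_const).differentiable (by simp))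
      have d := (hF z.1.1).hasFDerivAt.comp z.1 (hasFDerivAt_fst (𝕜 := ℝ) (p := z.1))
      have d' : HasFDerivAt (fun pp : (((EQ × EA) × EB) × EC) => B₂ pp.1 a b)
          ((fderiv ℝ (fun p₂ : (EQ × EA) × EB => B₂ p₂ a b) z.1.1).comp
            (ContinuousLinearMap.fst ℝ ((EQ × EA) × EB) EC)) z.1 := d
      rw [d'.fderiv]
      simp
    -- the main reduction of the derivative of OmegaCot
    have heq : ∀ U V' : ((((EQ × EA) × EB) × EC)) × (EQ →L[ℝ] ℝ),
        (fun z' : ((((EQ × EA) × EB) × EC)) × (EQ →L[ℝ] ℝ) =>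
          OmegaCot (fun p : ((EQ × EA) × EB) × EC => p.1.1.1)
            (fun p u v =>
              B₂ p.1 u.1 v.1
                + (fderiv ℝ (fun p' : (((EQ × EA) × EB) × EC) =>
                      β p' (A p'.1.1 v.1.1)) p u
                  - fderiv ℝ (fun p' : (((EQ × EA) × EB) × EC) =>
                      β p' (A p'.1.1 u.1.1)) p v)) z' U V')
        = fun z' => (V'.2 U.1.1.1.1 - U.2 V'.1.1.1.1)
            + (B₂ z'.1.1 U.1.1 V'.1.1
              + (fderiv ℝ (fun p' : (((EQ × EA) × EB) × EC) =>
                    β p' (A p'.1.1 V'.1.1.1)) z'.1 U.1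
                - fderiv ℝ (fun p' : (((EQ × EA) × EB) × EC) =>
                    β p' (A p'.1.1 U.1.1.1)) z'.1 V'.1)) := by
      intro U V'
      funext z'
      simp only [OmegaCot]
      rw [hε z'.1]
      simp only [ContinuousLinearMap.comp_apply, ContinuousLinearMap.coe_fst']
    have hD : ∀ U V' T : ((((EQ × EA) × EB) × EC)) × (EQ →L[ℝ] ℝ),
        fderiv ℝ (fun z' : ((((EQ × EA) × EB) × EC)) × (EQ →L[ℝ] ℝ) =>
            (V'.2 U.1.1.1.1 - U.2 V'.1.1.1.1)
              + (B₂ z'.1.1 U.1.1 V'.1.1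
                + (fderiv ℝ (fun p' : (((EQ × EA) × EB) × EC) =>
                      β p' (A p'.1.1 V'.1.1.1)) z'.1 U.1
                  - fderiv ℝ (fun p' : (((EQ × EA) × EB) × EC) =>
                      β p' (A p'.1.1 U.1.1.1)) z'.1 V'.1))) z T
          = fderiv ℝ (fun p₂ : (EQ × EA) × EB => B₂ p₂ U.1.1 V'.1.1) z.1.1 T.1.1
            + (fderiv ℝ (fderiv ℝ (fun p' : (((EQ × EA) × EB) × EC) =>
                  β p' (A p'.1.1 V'.1.1.1))) z.1 T.1 U.1
              - fderiv ℝ (fderiv ℝ (fun p' : (((EQ × EA) × EB) × EC) =>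
                  β p' (A p'.1.1 U.1.1.1))) z.1 T.1 V'.1) := by
      intro U V' T
      have d1 := ((hBd1 U.1.1 V'.1.1).differentiable (by simp) z.1).hasFDerivAt
      have d2 := ((hBd2 V'.1.1.1 U.1).differentiable (by simp) z.1).hasFDerivAt
      have d3 := ((hBd2 U.1.1.1 V'.1).differentiable (by simp) z.1).hasFDerivAt
      have d4 := (d1.add (d2.sub d3)).comp z (hasFDerivAt_fst (𝕜 := ℝ) (p := z))
      have d5 : HasFDerivAt (fun z' : ((((EQ × EA) × EB) × EC)) × (EQ →L[ℝ] ℝ) =>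
          (V'.2 U.1.1.1.1 - U.2 V'.1.1.1.1)
            + (B₂ z'.1.1 U.1.1 V'.1.1
              + (fderiv ℝ (fun p' : (((EQ × EA) × EB) × EC) =>
                    β p' (A p'.1.1 V'.1.1.1)) z'.1 U.1
                - fderiv ℝ (fun p' : (((EQ × EA) × EB) × EC) =>
                    β p' (A p'.1.1 U.1.1.1)) z'.1 V'.1)))
          (0 + (fderiv ℝ (fun pp : (((EQ × EA) × EB) × EC) => B₂ pp.1 U.1.1 V'.1.1) z.1
            + (fderiv ℝ (fun pp : (((EQ × EA) × EB) × EC) =>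
                  fderiv ℝ (fun p' : (((EQ × EA) × EB) × EC) =>
                    β p' (A p'.1.1 V'.1.1.1)) pp U.1) z.1
              - fderiv ℝ (fun pp : (((EQ × EA) × EB) × EC) =>
                  fderiv ℝ (fun p' : (((EQ × EA) × EB) × EC) =>
                    β p' (A p'.1.1 U.1.1.1)) pp V'.1) z.1)).comp
            (ContinuousLinearMap.fst ℝ (((EQ × EA) × EB) × EC) (EQ →L[ℝ] ℝ))) z :=
        (hasFDerivAt_const _ z).add d4
      rw [d5.fderiv]
      simp only [ContinuousLinearMap.comp_apply, ContinuousLinearMap.coe_fst',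
        ContinuousLinearMap.add_apply, ContinuousLinearMap.sub_apply,
        ContinuousLinearMap.zero_apply, zero_add]
      rw [hB2chain, hsnd, hsnd]
    rw [heq Y W', heq X W', heq X Y, hD Y W' X, hD X W' Y, hD X Y W']
    have hB := hB₂c z.1.1 X.1.1 Y.1.1 W'.1.1
    have h1 := hswz W'.1.1.1 X.1 Y.1
    have h2 := hswz Y.1.1.1 X.1 W'.1
    have h3 := hswz X.1.1.1 Y.1 W'.1
    linarith
end
end
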